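/- arXiv:2511.06097 — 7 statements merged into one kernel-verified Lean document; each statement's English description precedes it below -/
import Mathlib

section
/- Let γ0 ≥ 0 and h9 ∈ ℝ. Suppose ρ, U : [0,1] → M₃(ℂ) are differentiable, with ρ(t) Hermitian and U(t) skew-Hermitian for all t, satisfying ρ'(t) = [U(t), ρ(t)] and U'(t) = h9 [iG9, U(t)] + γ0 [G1, ρ(t)]. Then the control Hamiltonian t ↦ ½‖U(t)‖² − γ0 Tr(G1 ρ(t)) is constant on [0,1]. In particular, if the (1,1) entry of ρ(0) is zero, then ½‖U(t)‖² = ½‖U(0)‖² + γ0 Tr(G1 ρ(t)) for all t ∈ [0,1]. -/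
open Matrix Complex MeasureTheory
open scoped Real

noncomputable section

/-- 3×3 complex matrices. -/
abbrev M3 := Matrix (Fin 3) (Fin 3) ℂ

/-- Matrix commutator `[A,B] = AB - BA`. -/
def mcomm (A B : M3) : M3 := A * B - B * A

/-- Frobenius norm `‖A‖ = √Tr(AA†)`. -/
def fnorm (A : M3) : ℝ := Real.sqrt ((A * Aᴴ).trace.re)

def G1 : M3 := !![1, 0, 0; 0, 0, 0; 0, 0, 0]
def G2 : M3 := !![0, 0, 0; 0, 1, 0; 0, 0, 0]
def G3 : M3 := !![0, 0, 0; 0, 0, 0; 0, 0, 1]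
def G4 : M3 := (Real.sqrt 2 : ℂ)⁻¹ • !![0, 1, 0; 1, 0, 0; 0, 0, 0]
def G5 : M3 := (Real.sqrt 2 : ℂ)⁻¹ • !![0, I, 0; -I, 0, 0; 0, 0, 0]
def G6 : M3 := (Real.sqrt 2 : ℂ)⁻¹ • !![0, 0, 1; 0, 0, 0; 1, 0, 0]
def G7 : M3 := (Real.sqrt 2 : ℂ)⁻¹ • !![0, 0, I; 0, 0, 0; -I, 0, 0]
def G8 : M3 := (Real.sqrt 2 : ℂ)⁻¹ • !![0, 0, 0; 0, 0, 1; 0, 1, 0]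
def G9 : M3 := (Real.sqrt 2 : ℂ)⁻¹ • !![0, 0, 0; 0, 0, I; 0, -I, 0]

lemma re_deriv' {f : ℝ → ℂ} {d : ℂ} {t : ℝ} (h : HasDerivAt f d t) :
    HasDerivAt (fun s => (f s).re) d.re t := by
  exact (Complex.reCLM.hasFDerivAt.comp_hasDerivAt t h)

lemma im_deriv' {f : ℝ → ℂ} {d : ℂ} {t : ℝ} (h : HasDerivAt f d t) :
    HasDerivAt (fun s => (f s).im) d.im t := by
  exact (Complex.imCLM.hasFDerivAt.comp_hasDerivAt t h)

lemma traceG1' (X : M3) : (G1 * X).trace = X 0 0 := by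
  simp [G1, Matrix.trace, Matrix.diag, Matrix.mul_apply, Fin.sum_univ_three,
    Matrix.vecHead, Matrix.vecTail]

lemma skew_comm_trace (A Umat : M3) (hU : Umatᴴ = -Umat) :
    (Umatᴴ * mcomm A Umat).trace = 0 := by
  rw [hU]
  simp only [mcomm, mul_sub, trace_sub, ← mul_assoc]
  rw [Matrix.trace_mul_cycle (-Umat) A Umat]
  simp [mul_neg, neg_mul]

lemma skew_G1_trace (Umat ρmat : M3) (hU : Umatᴴ = -Umat) :
    (Umatᴴ * mcomm G1 ρmat).trace = (mcomm Umat ρmat) 0 0 := by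
  rw [hU]
  simp only [mcomm, mul_sub, trace_sub, ← mul_assoc]
  rw [Matrix.trace_mul_cycle (-Umat) G1 ρmat, Matrix.trace_mul_cycle (-Umat) ρmat G1,
      Matrix.trace_mul_cycle ρmat (-Umat) G1]
  simp only [mul_assoc, mul_neg, neg_mul, trace_neg, traceG1', Matrix.sub_apply]
  ring

lemma sum_eq_trace_re' (Umat D : M3) :
    ((Umatᴴ * D).trace).re
      = ∑ i, ∑ j, ((Umat i j).re * (D i j).re + (Umat i j).im * (D i j).im) := by
  simp [Matrix.trace, Matrix.diag, Matrix.mul_apply, Matrix.conjTranspose_apply,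
    Complex.mul_re, Fin.sum_univ_three]
  ring

lemma trace_self_re' (A : M3) :
    (A * Aᴴ).trace.re = ∑ i, ∑ j, ((A i j).re^2 + (A i j).im^2) := by
  simp [Matrix.trace, Matrix.diag, Matrix.mul_apply, Matrix.conjTranspose_apply,
    Complex.mul_re, Fin.sum_univ_three]
  ring

lemma fnorm_sq (A : M3) :
    (fnorm A)^2 = ∑ i, ∑ j, ((A i j).re^2 + (A i j).im^2) := by
  have hnn : 0 ≤ ((A * Aᴴ).trace.re) := by
    rw [trace_self_re']; positivity
  rw [fnorm, Real.sq_sqrt hnn, trace_self_re']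

/-- Along the extremal system `ρ' = [U,ρ]`, `U' = h9[iG9,U] + γ0[G1,ρ]`,
the control Hamiltonian `½‖U‖² − γ0 Tr(G1 ρ)` is constant on `[0,1]`; if moreover the
(1,1) entry of `ρ(0)` vanishes, then `½‖U(t)‖² = ½‖U(0)‖² + γ0 Tr(G1 ρ(t))`. -/
theorem control_hamiltonian_constant
    (γ0 : ℝ) (hγ0 : 0 ≤ γ0) (h9 : ℝ)
    (ρ U : ℝ → M3)
    (hρH : ∀ t, (ρ t).IsHermitian) (hUsk : ∀ t, (U t)ᴴ = -(U t))
    (hρ : ∀ t ∈ Set.Icc (0:ℝ) 1, ∀ i k,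
      HasDerivAt (fun s => ρ s i k) ((mcomm (U t) (ρ t)) i k) t)
    (hU : ∀ t ∈ Set.Icc (0:ℝ) 1, ∀ i k,
      HasDerivAt (fun s => U s i k)
        (((h9 : ℂ) • mcomm (I • G9) (U t) + (γ0 : ℂ) • mcomm G1 (ρ t)) i k) t) :
    (∀ t ∈ Set.Icc (0:ℝ) 1, ∀ t' ∈ Set.Icc (0:ℝ) 1,
      1/2 * (fnorm (U t))^2 - γ0 * ((G1 * ρ t).trace.re)
        = 1/2 * (fnorm (U t'))^2 - γ0 * ((G1 * ρ t').trace.re)) ∧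
    (ρ 0 0 0 = 0 → ∀ t ∈ Set.Icc (0:ℝ) 1,
      1/2 * (fnorm (U t))^2 = 1/2 * (fnorm (U 0))^2 + γ0 * ((G1 * ρ t).trace.re)) := by
  set g : ℝ → ℝ := fun t =>
    1/2 * (∑ i, ∑ j, ((U t i j).re^2 + (U t i j).im^2)) - γ0 * (ρ t 0 0).re with hgdef
  have hg0 : ∀ t ∈ Set.Icc (0:ℝ) 1, HasDerivAt g 0 t := by
    intro t ht
    set Dm : M3 := (h9 : ℂ) • mcomm (I • G9) (U t) + (γ0 : ℂ) • mcomm G1 (ρ t) with hDm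
    have hkey : ((U t)ᴴ * Dm).trace = (γ0 : ℂ) * (mcomm (U t) (ρ t) 0 0) := by
      rw [hDm, mul_add, trace_add, Matrix.mul_smul, trace_smul, Matrix.mul_smul, trace_smul,
          skew_comm_trace _ _ (hUsk t), skew_G1_trace _ _ (hUsk t)]
      simp [smul_eq_mul]
    have hF : HasDerivAt (fun s => ∑ i, ∑ j, ((U s i j).re^2 + (U s i j).im^2))
        (∑ i, ∑ j, (2 * (U t i j).re * (Dm i j).re + 2 * (U t i j).im * (Dm i j).im)) t := by
      apply HasDerivAt.fun_sum
      intro i _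
      apply HasDerivAt.fun_sum
      intro j _
      have h1 := (re_deriv' (hU t ht i j)).fun_pow 2
      have h2 := (im_deriv' (hU t ht i j)).fun_pow 2
      convert h1.fun_add h2 using 1
      push_cast
      rw [hDm]
      ring
    have hr := (re_deriv' (hρ t ht 0 0)).const_mul γ0
    have final := (hF.const_mul (1/2 : ℝ)).fun_sub hr
    have hval : 1/2 * (∑ i, ∑ j, (2 * (U t i j).re * (Dm i j).re
          + 2 * (U t i j).im * (Dm i j).im))
        - γ0 * ((mcomm (U t) (ρ t)) 0 0).re = 0 := by
      have h1 : (∑ i, ∑ j, ((U t i j).re * (Dm i j).re + (U t i j).im * (Dm i j).im))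
          = γ0 * ((mcomm (U t) (ρ t)) 0 0).re := by
        rw [← sum_eq_trace_re', hkey]
        simp [Complex.mul_re]
      have h2 : (∑ i, ∑ j, (2 * (U t i j).re * (Dm i j).re + 2 * (U t i j).im * (Dm i j).im))
          = 2 * (∑ i, ∑ j, ((U t i j).re * (Dm i j).re + (U t i j).im * (Dm i j).im)) := by
        rw [Finset.mul_sum]
        refine Finset.sum_congr rfl fun i _ => ?_
        rw [Finset.mul_sum]
        exact Finset.sum_congr rfl fun j _ => by ring
      rw [h2, h1]; ring
    rw [hgdef]
    exact final.congr_deriv hval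
  have hcon : ∀ x ∈ Set.Icc (0:ℝ) 1, g x = g 0 := by
    apply constant_of_has_deriv_right_zero
    · intro x hx
      exact (hg0 x hx).continuousAt.continuousWithinAt
    · intro x hx
      exact (hg0 x (Set.Ico_subset_Icc_self hx)).hasDerivWithinAt
  have hexpr : ∀ t, 1/2 * (fnorm (U t))^2 - γ0 * ((G1 * ρ t).trace.re) = g t := by
    intro t
    rw [fnorm_sq, traceG1', hgdef]
  constructor
  · intro t ht t' ht'
    rw [hexpr t, hexpr t', hcon t ht, hcon t' ht']
  · intro h0 t ht
    have h1 := hcon t ht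
    rw [hgdef] at h1
    simp only at h1
    have h2 : (ρ 0 0 0).re = 0 := by rw [h0]; simp
    rw [fnorm_sq, fnorm_sq, traceG1']
    rw [h2] at h1
    linarith [h1]
end
end

section
/- Let h9 ∈ ℝ and set A := h9 · iG9. Let P be an arbitrary 3×3 skew-Hermitian matrix and ρ0 an arbitrary 3×3 Hermitian matrix. Define U(t) := e^{At} P e^{−At} and ρ(t) := e^{At} e^{(−A+P)t} ρ0 e^{(A−P)t} e^{−At}, where e^{·} is the matrix exponential. Then for all t ∈ ℝ: ρ'(t) = [U(t), ρ(t)] with ρ(0) = ρ0; U'(t) = h9 [iG9, U(t)] with U(0) = P; and ‖U(t)‖ = ‖P‖. In particular, for the zero-occupancy cost (γ0 = 0), the control energy of this pair on [0,1] equals ∫₀¹ ½‖U(t)‖² dt = ½‖P‖². -/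
open Matrix Complex MeasureTheory
open scoped Real

noncomputable section

section helperSection

open NormedSpace

private theorem key_ring_U {R : Type*} [Ring R] (f g A P : R)
    (hfA : f * A = A * f) (hgA : g * A = A * g) :
    A * (f * P * g) - (f * P * g) * A = f * A * P * g + f * P * (g * -A) := by
  have h4 : (f * P * g) * A = f * P * (g * A) := by noncomm_ring
  rw [h4, hgA, hfA, mul_neg, hgA]
  noncomm_ring

private theorem key_ring_rho {R : Type*} [Ring R] (f g E F A P r : R)
    (hES : E * (-A + P) = (-A + P) * E) (hgA : g * A = A * g) (hgf : g * f = 1) :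
    (f * P * g) * (f * E * r * F * g) - (f * E * r * F * g) * (f * P * g) =
    ((f * A * E + f * (E * (-A + P))) * r * F + f * E * r * (F * (A - P))) * g
      + f * E * r * F * (g * -A) := by
  rw [hES]
  have h1 : (f*P*g)*(f*E*r*F*g) = f*P*(g*f)*(E*r*F*g) := by noncomm_ring
  have h2 : (f*E*r*F*g)*(f*P*g) = f*E*r*F*(g*f)*(P*g) := by noncomm_ring
  have h3 : g * -A = -(A * g) := by rw [mul_neg, hgA]
  rw [h1, h2, hgf, h3]
  noncomm_ring

attribute [local instance] Matrix.linftyOpNormedAddCommGroup Matrix.linftyOpNormedRing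
  Matrix.linftyOpNormedAlgebra

private def entryLM (i j : Fin 3) : M3 →ₗ[ℝ] ℂ :=
  { toFun := fun M => M i j, map_add' := fun _ _ => rfl, map_smul' := fun _ _ => rfl }

private theorem entry_hasDerivAt {F : ℝ → M3} {D : M3} {t : ℝ}
    (h : HasDerivAt F D t) (i j : Fin 3) :
    HasDerivAt (fun s => F s i j) (D i j) t :=
  (entryLM i j).toContinuousLinearMap.hasFDerivAt.comp_hasDerivAt t h

private theorem hasDerivAt_exp' (A : M3) (t : ℝ) :
    HasDerivAt (fun s : ℝ => exp (s • A)) (exp (t • A) * A) t := by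
  exact hasDerivAt_exp_smul_const (𝕂 := ℝ) A t

private theorem hasDerivAt_exp_neg (A : M3) (t : ℝ) :
    HasDerivAt (fun s : ℝ => exp (-(s • A))) (exp (-(t • A)) * -A) t := by
  have := hasDerivAt_exp' (-A) t
  simpa [smul_neg] using this

private theorem exp_gf (A : M3) (t : ℝ) :
    exp (-(t • A)) * exp (t • A) = 1 := by
  rw [← Matrix.exp_add_of_commute _ _ ((Commute.refl (t • A)).neg_left), neg_add_cancel, NormedSpace.exp_zero]

private theorem U_entry_deriv (A P : M3) (t : ℝ) (i j : Fin 3) :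
    HasDerivAt (fun s : ℝ => (exp (s • A) * P * exp (-(s • A))) i j)
      ((A * (exp (t • A) * P * exp (-(t • A)))
        - (exp (t • A) * P * exp (-(t • A))) * A) i j) t := by
  apply entry_hasDerivAt
  have h := ((hasDerivAt_exp' A t).mul_const P).mul (hasDerivAt_exp_neg A t)
  refine h.congr_deriv ?_
  have hfA : exp (t • A) * A = A * exp (t • A) :=
    ((Commute.refl A).smul_left t).exp_left
  have hgA : exp (-(t • A)) * A = A * exp (-(t • A)) :=
    (((Commute.refl A).smul_left t).neg_left).exp_left
  exact (key_ring_U _ _ _ _ hfA hgA).symm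

private theorem rho_entry_deriv (A P ρ0 : M3) (t : ℝ) (i j : Fin 3) :
    HasDerivAt
      (fun s : ℝ => (exp (s • A) * exp (s • (-A + P)) * ρ0 * exp (s • (A - P))
        * exp (-(s • A))) i j)
      (((exp (t • A) * P * exp (-(t • A)))
          * (exp (t • A) * exp (t • (-A + P)) * ρ0 * exp (t • (A - P)) * exp (-(t • A)))
        - (exp (t • A) * exp (t • (-A + P)) * ρ0 * exp (t • (A - P)) * exp (-(t • A)))
          * (exp (t • A) * P * exp (-(t • A)))) i j) t := by
  apply entry_hasDerivAt
  have h := ((((hasDerivAt_exp' A t).mul (hasDerivAt_exp' (-A + P) t)).mul_const ρ0).mul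
    (hasDerivAt_exp' (A - P) t)).mul (hasDerivAt_exp_neg A t)
  refine h.congr_deriv ?_
  have hES : exp (t • (-A + P)) * (-A + P) = (-A + P) * exp (t • (-A + P)) :=
    ((Commute.refl (-A + P)).smul_left t).exp_left
  have hgA : exp (-(t • A)) * A = A * exp (-(t • A)) :=
    (((Commute.refl A).smul_left t).neg_left).exp_left
  exact (key_ring_rho _ _ _ _ _ _ _ hES hgA (exp_gf A t)).symm

private theorem exp_ct (A : M3) (hAH : Aᴴ = -A) (t : ℝ) :
    (exp (t • A))ᴴ = exp (-(t • A)) := by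
  rw [← Matrix.exp_conjTranspose]
  congr 1
  rw [Matrix.conjTranspose_smul, star_trivial, hAH, smul_neg]

private theorem U_trace (A P : M3) (hAH : Aᴴ = -A) (t : ℝ) :
    ((exp (t • A) * P * exp (-(t • A)))
      * (exp (t • A) * P * exp (-(t • A)))ᴴ).trace = (P * Pᴴ).trace := by
  have hf := exp_ct A hAH t
  have hg : (exp (-(t • A)))ᴴ = exp (t • A) := by
    rw [← Matrix.exp_conjTranspose]
    congr 1
    rw [Matrix.conjTranspose_neg, Matrix.conjTranspose_smul, star_trivial, hAH, smul_neg,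
      neg_neg]
  rw [Matrix.conjTranspose_mul, Matrix.conjTranspose_mul, hf, hg]
  have key : (exp (t • A) * P * exp (-(t • A)))
      * (exp (t • A) * (Pᴴ * exp (-(t • A))))
      = exp (t • A) * ((P * Pᴴ) * exp (-(t • A))) := by
    have h1 : (exp (t • A) * P * exp (-(t • A)))
        * (exp (t • A) * (Pᴴ * exp (-(t • A))))
        = exp (t • A) * P * (exp (-(t • A)) * exp (t • A)) * (Pᴴ * exp (-(t • A))) := by
      noncomm_ring
    rw [h1, exp_gf, mul_one]
    noncomm_ring
  rw [key, Matrix.trace_mul_comm, mul_assoc, exp_gf, mul_one]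

end helperSection

/-- explicit solution of the extremal system in the zero-occupancy case:
`U(t) = e^{At}Pe^{−At}`, `ρ(t) = e^{At}e^{(−A+P)t}ρ0e^{(A−P)t}e^{−At}` solve
`ρ' = [U,ρ]`, `U' = h9[iG9,U]` with `ρ(0) = ρ0`, `U(0) = P`, `‖U(t)‖ = ‖P‖`, and the
control energy on `[0,1]` is `½‖P‖²`. -/
theorem explicit_zero_occupancy_solution
    (h9 : ℝ) (P ρ0 : M3) (hP : Pᴴ = -P) (hρ0 : ρ0.IsHermitian)
    (A : M3) (hA : A = (h9 : ℂ) • (I • G9))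
    (U ρ : ℝ → M3)
    (hUdef : ∀ t : ℝ, U t = NormedSpace.exp (t • A) * P * NormedSpace.exp (-(t • A)))
    (hρdef : ∀ t : ℝ, ρ t = NormedSpace.exp (t • A) * NormedSpace.exp (t • (-A + P))
        * ρ0 * NormedSpace.exp (t • (A - P)) * NormedSpace.exp (-(t • A))) :
    (∀ t : ℝ, ∀ i j, HasDerivAt (fun s => ρ s i j) ((mcomm (U t) (ρ t)) i j) t) ∧
    ρ 0 = ρ0 ∧
    (∀ t : ℝ, ∀ i j,
      HasDerivAt (fun s => U s i j) (((h9 : ℂ) • mcomm (I • G9) (U t)) i j) t) ∧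
    U 0 = P ∧
    (∀ t : ℝ, fnorm (U t) = fnorm P) ∧
    (∫ t in (0:ℝ)..1, 1/2 * (fnorm (U t))^2) = 1/2 * (fnorm P)^2 := by
  have hAH : Aᴴ = -A := by
    subst hA
    ext i j
    fin_cases i <;> fin_cases j <;>
      simp [G9, Matrix.conjTranspose_apply, Matrix.vecHead, Matrix.vecTail, Complex.ext_iff]
  have hU0 : U 0 = P := by
    rw [hUdef]
    simp [NormedSpace.exp_zero]
  have hρ0' : ρ 0 = ρ0 := by
    rw [hρdef]
    simp [NormedSpace.exp_zero]
  have hnorm : ∀ t : ℝ, fnorm (U t) = fnorm P := by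
    intro t
    rw [fnorm, fnorm, hUdef, U_trace A P hAH t]
  refine ⟨?_, hρ0', ?_, hU0, hnorm, ?_⟩
  · intro t i j
    have hfun : (fun s => ρ s i j) = fun s =>
        (NormedSpace.exp (s • A) * NormedSpace.exp (s • (-A + P)) * ρ0
          * NormedSpace.exp (s • (A - P)) * NormedSpace.exp (-(s • A))) i j :=
      funext fun s => by rw [hρdef]
    rw [hfun, show (mcomm (U t) (ρ t)) i j = _ from by rw [mcomm, hUdef, hρdef]]
    exact rho_entry_deriv A P ρ0 t i j
  · intro t i j
    have hfun : (fun s => U s i j) = fun s =>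
        (NormedSpace.exp (s • A) * P * NormedSpace.exp (-(s • A))) i j :=
      funext fun s => by rw [hUdef]
    have hval : (h9 : ℂ) • mcomm (I • G9) (U t) = A * U t - U t * A := by
      simp only [hA, mcomm, smul_sub, smul_mul_assoc, mul_smul_comm]
    rw [hfun, hval, hUdef]
    exact U_entry_deriv A P t i j
  · simp only [hnorm]
    simp
end
end

section
/- Let γ0 ≥ 0, 0 < a < 1, h9 ∈ ℝ, and B_L, B_U ∈ ℝ. Suppose ρ, U : [0,1] → M₃(ℂ) are differentiable with ρ(t) Hermitian, U(t) skew-Hermitian, satisfying ρ'(t) = [U(t), ρ(t)] and U'(t) = h9 [iG9, U(t)] + γ0 [G1, ρ(t)], with U(0) = P, Tr(G1 ρ(0)) = 0, and 0 ≤ Tr(G1 ρ(t)) ≤ a for all t. If B_L ≤ ∫₀¹ ½‖U(t)‖² + γ0 Tr(G1 ρ(t)) dt ≤ B_U, then √(max{0, 2B_L − 4γ0 a}) ≤ ‖P‖ ≤ √2 · √B_U. -/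
open Matrix Complex MeasureTheory
open scoped Real

noncomputable section

lemma G1_eq' : G1 = Matrix.of (fun i j => if i = 0 ∧ j = 0 then (1:ℂ) else 0) := by
  ext i j
  fin_cases i <;> fin_cases j <;> simp [G1, Matrix.vecHead, Matrix.vecTail]

lemma IG9_eq' : I • G9 = Matrix.of (fun i j =>
    if i = 1 ∧ j = 2 then -(Real.sqrt 2 : ℂ)⁻¹ else
    if i = 2 ∧ j = 1 then (Real.sqrt 2 : ℂ)⁻¹ else 0) := by
  ext i j
  fin_cases i <;> fin_cases j <;>
    simp [G9, Matrix.vecHead, Matrix.vecTail, smul_eq_mul] <;> ring_nf <;>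
    simp [Complex.I_sq]

set_option maxHeartbeats 1000000 in
lemma key_identity (h9 γ0 : ℂ) (Ut ρt : M3) :
    (-(1/2) : ℂ) * (∑ i, ∑ k, ((h9 • mcomm (I • G9) Ut + γ0 • mcomm G1 ρt) i k * Ut k i
        + Ut i k * (h9 • mcomm (I • G9) Ut + γ0 • mcomm G1 ρt) k i))
      - γ0 * (mcomm Ut ρt) 0 0 = 0 := by
  simp only [mcomm, G1_eq', IG9_eq', Matrix.add_apply, Matrix.sub_apply, Matrix.smul_apply,
    Matrix.mul_apply, Fin.sum_univ_three, smul_eq_mul, Matrix.of_apply,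
    show (0:Fin 3) ≠ 1 by decide, show (0:Fin 3) ≠ 2 by decide, show (1:Fin 3) ≠ 0 by decide,
    show (1:Fin 3) ≠ 2 by decide, show (2:Fin 3) ≠ 0 by decide, show (2:Fin 3) ≠ 1 by decide,
    if_true, if_false, and_true, true_and, and_false, false_and, ite_false, ite_true,
    and_self, ne_eq, not_false_iff]
  norm_num
  ring

lemma trace_skew' (A : M3) (hA : Aᴴ = -A) :
    (A * Aᴴ).trace = -(∑ i, ∑ k, A i k * A k i) := by
  rw [hA, Matrix.mul_neg, Matrix.trace_neg]
  simp [Matrix.trace, Matrix.diag, Matrix.mul_apply]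

lemma trace_sq_re_nonneg' (A : M3) : 0 ≤ ((A * Aᴴ).trace).re := by
  have h : ((A * Aᴴ).trace).re = ∑ i, ∑ j, Complex.normSq (A i j) := by
    simp [Matrix.trace, Matrix.diag, Matrix.mul_apply, Matrix.conjTranspose_apply,
      Complex.mul_conj, Complex.re_sum]
  rw [h]
  exact Finset.sum_nonneg fun i _ => Finset.sum_nonneg fun j _ => Complex.normSq_nonneg _

lemma fnorm_sq' (A : M3) : fnorm A ^ 2 = ((A * Aᴴ).trace).re :=
  Real.sq_sqrt (trace_sq_re_nonneg' A)

lemma trace_G1_mul' (A : M3) : (G1 * A).trace = A 0 0 := by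
  simp [Matrix.trace, Matrix.diag, Matrix.mul_apply, G1_eq', Fin.sum_univ_three,
    show (1:Fin 3) ≠ 0 by decide, show (2:Fin 3) ≠ 0 by decide]

/-- cost bounds `B_L ≤ J ≤ B_U` along the extremal system translate into
bounds `√(max{0, 2B_L − 4γ0 a}) ≤ ‖P‖ ≤ √2·√B_U` on the initial control norm. -/
theorem control_norm_bounds
    (γ0 : ℝ) (hγ0 : 0 ≤ γ0)
    (a : ℝ) (ha1 : 0 < a) (ha2 : a < 1)
    (h9 : ℝ) (BL BU : ℝ)
    (ρ U : ℝ → M3) (P : M3)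
    (hρH : ∀ t, (ρ t).IsHermitian) (hUsk : ∀ t, (U t)ᴴ = -(U t))
    (hρ : ∀ t ∈ Set.Icc (0:ℝ) 1, ∀ i k,
      HasDerivAt (fun s => ρ s i k) ((mcomm (U t) (ρ t)) i k) t)
    (hU : ∀ t ∈ Set.Icc (0:ℝ) 1, ∀ i k,
      HasDerivAt (fun s => U s i k)
        (((h9 : ℂ) • mcomm (I • G9) (U t) + (γ0 : ℂ) • mcomm G1 (ρ t)) i k) t)
    (hP : U 0 = P)
    (hocc0 : (G1 * ρ 0).trace = 0)
    (hocc : ∀ t ∈ Set.Icc (0:ℝ) 1,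
      0 ≤ (G1 * ρ t).trace.re ∧ (G1 * ρ t).trace.re ≤ a)
    (hBL : BL ≤ ∫ t in (0:ℝ)..1, (1/2 * (fnorm (U t))^2 + γ0 * ((G1 * ρ t).trace.re)))
    (hBU : (∫ t in (0:ℝ)..1, (1/2 * (fnorm (U t))^2 + γ0 * ((G1 * ρ t).trace.re))) ≤ BU) :
    Real.sqrt (max 0 (2 * BL - 4 * γ0 * a)) ≤ fnorm P ∧
      fnorm P ≤ Real.sqrt 2 * Real.sqrt BU := by
  set c : ℝ → ℂ := fun t => (-(1/2) : ℂ) * (∑ i, ∑ k, U t i k * U t k i) - (γ0:ℂ) * ρ t 0 0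
    with hc
  -- conservation of energy
  have hder : ∀ t ∈ Set.Icc (0:ℝ) 1, HasDerivAt c 0 t := by
    intro t ht
    have h1 : HasDerivAt (fun s => ∑ i : Fin 3, ∑ k : Fin 3, U s i k * U s k i)
        (∑ i : Fin 3, ∑ k : Fin 3,
          (((h9 : ℂ) • mcomm (I • G9) (U t) + (γ0 : ℂ) • mcomm G1 (ρ t)) i k * U t k i
            + U t i k * ((h9 : ℂ) • mcomm (I • G9) (U t) + (γ0 : ℂ) • mcomm G1 (ρ t)) k i)) t := by
      refine HasDerivAt.fun_sum fun i _ => HasDerivAt.fun_sum fun k _ => ?_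
      exact (hU t ht i k).mul (hU t ht k i)
    have h2 := hρ t ht 0 0
    have h3 := (h1.const_mul ((-(1/2)) : ℂ)).sub (h2.const_mul (γ0:ℂ))
    have h4 := key_identity (h9:ℂ) (γ0:ℂ) (U t) (ρ t)
    rw [h4] at h3
    exact h3
  have hconst : ∀ t ∈ Set.Icc (0:ℝ) 1, c t = c 0 := by
    refine constant_of_has_deriv_right_zero
      (fun t ht => ((hder t ht).continuousAt.continuousWithinAt)) (fun t ht => ?_)
    exact (hder t (Set.Ico_subset_Icc_self ht)).hasDerivWithinAt
  -- real part of c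
  have hre : ∀ t, (c t).re = 1/2 * (fnorm (U t))^2 - γ0 * ((G1 * ρ t).trace).re := by
    intro t
    have h2 : c t = ((1/2 : ℝ) : ℂ) * (U t * (U t)ᴴ).trace - ((γ0:ℝ) : ℂ) * ρ t 0 0 := by
      rw [hc, trace_skew' (U t) (hUsk t)]
      push_cast
      ring
    rw [h2]
    have := trace_G1_mul' (ρ t)
    rw [Complex.sub_re, Complex.re_ofReal_mul, Complex.re_ofReal_mul, fnorm_sq', ← this]
  -- initial value
  have hc0 : (c 0).re = 1/2 * (fnorm P)^2 := by
    rw [hre 0, hP, hocc0]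
    simp
  -- occupancy integrability
  have hcontocc : ContinuousOn (fun t => ((G1 * ρ t).trace).re) (Set.Icc (0:ℝ) 1) := by
    have h1 : ContinuousOn (fun t => ρ t 0 0) (Set.Icc (0:ℝ) 1) :=
      fun t ht => ((hρ t ht 0 0).continuousAt.continuousWithinAt)
    have h2 : ContinuousOn (fun t => (ρ t 0 0).re) (Set.Icc (0:ℝ) 1) :=
      Complex.continuous_re.comp_continuousOn h1
    refine h2.congr fun t _ => ?_
    rw [trace_G1_mul']
  have hSint : IntervalIntegrable (fun t => ((G1 * ρ t).trace).re) volume 0 1 := by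
    apply ContinuousOn.intervalIntegrable
    rwa [Set.uIcc_of_le (by norm_num : (0:ℝ) ≤ 1)]
  -- rewrite the cost integral
  have heq : Set.EqOn (fun t => 1/2 * (fnorm (U t))^2 + γ0 * ((G1 * ρ t).trace.re))
      (fun t => 1/2 * (fnorm P)^2 + (2*γ0) * ((G1 * ρ t).trace.re))
      (Set.uIcc (0:ℝ) 1) := by
    rw [Set.uIcc_of_le (by norm_num : (0:ℝ) ≤ 1)]
    intro t ht
    have h1 : (c t).re = (c 0).re := by rw [hconst t ht]
    rw [hre t, hc0] at h1
    simp only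
    linarith
  have hJeq : (∫ t in (0:ℝ)..1, (1/2 * (fnorm (U t))^2 + γ0 * ((G1 * ρ t).trace.re)))
      = 1/2 * (fnorm P)^2 + (2*γ0) * ∫ t in (0:ℝ)..1, ((G1 * ρ t).trace).re := by
    rw [intervalIntegral.integral_congr heq,
      intervalIntegral.integral_add intervalIntegrable_const (hSint.const_mul _),
      intervalIntegral.integral_const, intervalIntegral.integral_const_mul]
    simp
  set S := ∫ t in (0:ℝ)..1, ((G1 * ρ t).trace).re with hS
  have hS0 : 0 ≤ S :=
    intervalIntegral.integral_nonneg (by norm_num) (fun t ht => (hocc t ht).1)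
  have hSa : S ≤ a := by
    have := intervalIntegral.integral_mono_on (by norm_num : (0:ℝ) ≤ 1) hSint
      (intervalIntegrable_const (c := a)) (fun t ht => (hocc t ht).2)
    simpa using this
  rw [hJeq] at hBL hBU
  have hN0 : 0 ≤ fnorm P := Real.sqrt_nonneg _
  constructor
  · have h1 : max 0 (2 * BL - 4 * γ0 * a) ≤ (fnorm P)^2 := by
      apply max_le (by positivity)
      nlinarith [mul_nonneg hγ0 hS0, mul_nonneg hγ0 (sub_nonneg.mpr hSa)]
    calc Real.sqrt (max 0 (2 * BL - 4 * γ0 * a)) ≤ Real.sqrt ((fnorm P)^2) :=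
          Real.sqrt_le_sqrt h1
      _ = fnorm P := Real.sqrt_sq hN0
  · have h1 : (fnorm P)^2 ≤ 2 * BU := by
      nlinarith [mul_nonneg hγ0 hS0]
    calc fnorm P = Real.sqrt ((fnorm P)^2) := (Real.sqrt_sq hN0).symm
      _ ≤ Real.sqrt (2 * BU) := Real.sqrt_le_sqrt h1
      _ = Real.sqrt 2 * Real.sqrt BU := Real.sqrt_mul (by norm_num) BU
end
end

section
/- Let 1/2 ≤ a ≤ 1 and ρ0 := diag(0, a, 1−a). Let p ∈ ℝ and β ∈ ℂ, and let P be the skew-Hermitian matrix P := [[0, p, β],[−p, 0, 0],[−β̄, 0, 0]]. Then for every τ ≥ 0, ‖ ∫₀^τ [e^{iG9 s} P e^{−iG9 s}, ρ0] ds ‖ ≤ 2√2 · a · ‖P‖, where the integral is the entrywise integral of the matrix-valued function, e^{·} is the matrix exponential, and ‖·‖ is the Frobenius norm. -/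
open Matrix Complex MeasureTheory
open scoped Real

noncomputable section

/-- The one-parameter rotation group generated by `i G9`. -/
noncomputable def Es (s : ℝ) : M3 :=
  !![1, 0, 0;
     0, (Real.cos (s / Real.sqrt 2) : ℂ), -(Real.sin (s / Real.sqrt 2) : ℂ);
     0, (Real.sin (s / Real.sqrt 2) : ℂ), (Real.cos (s / Real.sqrt 2) : ℂ)]

lemma sqrt2_ne : (Real.sqrt 2 : ℂ) ≠ 0 := by
  exact_mod_cast (Real.sqrt_pos.mpr (by norm_num)).ne'

lemma diag3 (x y z : ℂ) : Matrix.diagonal ![x, y, z] = !![x, 0, 0; 0, y, 0; 0, 0, z] := by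
  ext i j
  fin_cases i <;> fin_cases j <;>
    simp [Matrix.diagonal_apply, Matrix.vecHead, Matrix.vecTail]

set_option maxHeartbeats 1600000 in
lemma exp_sG9 (s : ℝ) : NormedSpace.exp (s • (I • G9)) = Es s := by
  have h2 := sqrt2_ne
  set U : M3 := !![1, 0, 0; 0, 1, 1; 0, -I, I] with hU
  set V : M3 := !![1, 0, 0; 0, 1/2, I/2; 0, 1/2, -I/2] with hV
  have hUV : U * V = 1 := by
    rw [hU, hV, Matrix.mul_fin_three, Matrix.one_fin_three]
    ext i j
    fin_cases i <;> fin_cases j <;> simp <;> ring_nf <;> simp [Complex.I_sq] <;> norm_num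
  have hVU : V * U = 1 := by
    rw [hU, hV, Matrix.mul_fin_three, Matrix.one_fin_three]
    ext i j
    fin_cases i <;> fin_cases j <;> simp <;> ring_nf <;> simp [Complex.I_sq] <;> norm_num
  set u : (M3)ˣ := ⟨U, V, hUV, hVU⟩ with hu
  set c : ℂ := (s : ℂ) / (Real.sqrt 2 : ℂ) with hc
  set d : Fin 3 → ℂ := ![0, I * c, -(I * c)] with hd
  have hv : ((u⁻¹ : (M3)ˣ) : M3) = V := rfl
  have huu : (u : M3) = U := rfl
  have hconj : s • (I • G9) = (u : M3) * Matrix.diagonal d * ((u⁻¹ : (M3)ˣ) : M3) := by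
    rw [hv, huu, hd, diag3, hU, hV, Matrix.mul_fin_three, Matrix.mul_fin_three]
    ext i j
    fin_cases i <;> fin_cases j
    all_goals simp [G9, hc, Matrix.vecHead, Matrix.vecTail]
    all_goals (try field_simp)
    all_goals (try ring_nf)
    all_goals simp [Complex.I_sq]
    all_goals (try ring)
  rw [hconj, Matrix.exp_units_conj, Matrix.exp_diagonal, hv, huu]
  have hcast : c = ((s / Real.sqrt 2 : ℝ) : ℂ) := by rw [hc]; push_cast; ring
  have e1 : Complex.exp (I * c)
      = (Real.cos (s / Real.sqrt 2) : ℂ) + (Real.sin (s / Real.sqrt 2) : ℂ) * I := by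
    rw [mul_comm, Complex.exp_mul_I, hcast]
    simp [← Complex.ofReal_div, ← Complex.ofReal_cos, ← Complex.ofReal_sin]
  have e2 : Complex.exp (-(I * c))
      = (Real.cos (s / Real.sqrt 2) : ℂ) - (Real.sin (s / Real.sqrt 2) : ℂ) * I := by
    rw [show -(I * c) = (-c) * I by ring, Complex.exp_mul_I, Complex.cos_neg, Complex.sin_neg,
      hcast]
    simp [← Complex.ofReal_div, ← Complex.ofReal_cos, ← Complex.ofReal_sin]
    ring
  have hed : (NormedSpace.exp d) = ![1,
      (Real.cos (s / Real.sqrt 2) : ℂ) + (Real.sin (s / Real.sqrt 2) : ℂ) * I,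
      (Real.cos (s / Real.sqrt 2) : ℂ) - (Real.sin (s / Real.sqrt 2) : ℂ) * I] := by
    funext i
    rw [Pi.coe_exp]
    fin_cases i <;>
      simp [hd, ← Complex.exp_eq_exp_ℂ, e1, e2, Matrix.vecHead, Matrix.vecTail]
  rw [hed, diag3, hU, hV, Matrix.mul_fin_three, Matrix.mul_fin_three]
  ext i j
  fin_cases i <;> fin_cases j
  all_goals simp [Es, Matrix.vecHead, Matrix.vecTail]
  all_goals (try ring_nf)
  all_goals (try simp [Complex.I_sq])
  all_goals (try ring)

lemma Icos (τ : ℝ) : (∫ s in (0:ℝ)..τ, Real.cos (s / Real.sqrt 2))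
    = Real.sqrt 2 * Real.sin (τ / Real.sqrt 2) := by
  rw [intervalIntegral.integral_comp_div (f := Real.cos) (by positivity : Real.sqrt 2 ≠ 0)]
  simp [integral_cos]

lemma Isin (τ : ℝ) : (∫ s in (0:ℝ)..τ, Real.sin (s / Real.sqrt 2))
    = Real.sqrt 2 * (1 - Real.cos (τ / Real.sqrt 2)) := by
  rw [intervalIntegral.integral_comp_div (f := Real.sin) (by positivity : Real.sqrt 2 ≠ 0)]
  simp [integral_sin]

set_option maxHeartbeats 3200000 in
/-- the averaging bound (UB3):
`‖∫₀^τ [e^{iG9 s} P e^{−iG9 s}, ρ0] ds‖ ≤ 2√2·a·‖P‖`. -/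
theorem averaging_integral_bound
    (a : ℝ) (ha1 : 1/2 ≤ a) (ha2 : a ≤ 1)
    (p : ℝ) (β : ℂ)
    (ρ0 P : M3)
    (hρ0 : ρ0 = !![0, 0, 0; 0, (a : ℂ), 0; 0, 0, ((1 - a : ℝ) : ℂ)])
    (hP : P = !![0, (p : ℂ), β; -(p : ℂ), 0, 0; -(starRingEnd ℂ β), 0, 0])
    (τ : ℝ) (hτ : 0 ≤ τ) :
    fnorm (Matrix.of fun i j => ∫ s in (0:ℝ)..τ,
        (mcomm (NormedSpace.exp (s • (I • G9)) * P
          * NormedSpace.exp (-(s • (I • G9)))) ρ0) i j)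
      ≤ 2 * Real.sqrt 2 * a * fnorm P := by
  have hexpneg : ∀ s : ℝ, NormedSpace.exp (-(s • (I • G9))) = Es (-s) := by
    intro s; rw [← neg_smul]; exact exp_sG9 (-s)
  set Amat : M3 := !![0, (a:ℂ)*(p:ℂ), ((1-a:ℝ):ℂ)*β;
    (a:ℂ)*(p:ℂ), 0, 0; ((1-a:ℝ):ℂ)*(starRingEnd ℂ β), 0, 0] with hAmat
  set Bmat : M3 := !![0, -((a:ℂ)*β), ((1-a:ℝ):ℂ)*(p:ℂ);
    -((a:ℂ)*(starRingEnd ℂ β)), 0, 0, ; ((1-a:ℝ):ℂ)*(p:ℂ), 0, 0] with hBmat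
  have key : ∀ s : ℝ, mcomm (Es s * P * Es (-s)) ρ0
      = (Real.cos (s / Real.sqrt 2) : ℂ) • Amat + (Real.sin (s / Real.sqrt 2) : ℂ) • Bmat := by
    intro s
    rw [hρ0, hP, mcomm]
    rw [show Es (-s) = !![1, 0, 0;
        0, (Real.cos (s / Real.sqrt 2) : ℂ), (Real.sin (s / Real.sqrt 2) : ℂ);
        0, -(Real.sin (s / Real.sqrt 2) : ℂ), (Real.cos (s / Real.sqrt 2) : ℂ)] from by
      rw [Es]; push_cast [neg_div, Real.cos_neg, Real.sin_neg]; ring_nf]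
    rw [Es, Matrix.mul_fin_three, Matrix.mul_fin_three, Matrix.mul_fin_three,
      Matrix.mul_fin_three]
    ext i j
    fin_cases i <;> fin_cases j
    all_goals simp [hAmat, hBmat, Matrix.vecHead, Matrix.vecTail]
    all_goals (try push_cast)
    all_goals (try ring)
  set S : ℝ := Real.sqrt 2 * Real.sin (τ / Real.sqrt 2) with hS
  set Cc : ℝ := Real.sqrt 2 * (1 - Real.cos (τ / Real.sqrt 2)) with hCc
  have hM : (Matrix.of fun i j => ∫ s in (0:ℝ)..τ,
      (mcomm (NormedSpace.exp (s • (I • G9)) * P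
        * NormedSpace.exp (-(s • (I • G9)))) ρ0) i j)
      = (S : ℂ) • Amat + (Cc : ℂ) • Bmat := by
    ext i j
    have hint1 : IntervalIntegrable
        (fun s : ℝ => ((Real.cos (s / Real.sqrt 2) : ℝ) : ℂ) * Amat i j) volume 0 τ := by
      apply Continuous.intervalIntegrable
      exact (Complex.continuous_ofReal.comp
        (Real.continuous_cos.comp (continuous_id.div_const _))).mul continuous_const
    have hint2 : IntervalIntegrable
        (fun s : ℝ => ((Real.sin (s / Real.sqrt 2) : ℝ) : ℂ) * Bmat i j) volume 0 τ := by
      apply Continuous.intervalIntegrable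
      exact (Complex.continuous_ofReal.comp
        (Real.continuous_sin.comp (continuous_id.div_const _))).mul continuous_const
    simp only [Matrix.of_apply]
    rw [intervalIntegral.integral_congr (g := fun s : ℝ =>
        ((Real.cos (s / Real.sqrt 2) : ℝ) : ℂ) * Amat i j
        + ((Real.sin (s / Real.sqrt 2) : ℝ) : ℂ) * Bmat i j)
      (fun s _ => by
        rw [exp_sG9, hexpneg, key]
        simp [Matrix.add_apply, Matrix.smul_apply, smul_eq_mul])]
    rw [intervalIntegral.integral_add hint1 hint2,
      intervalIntegral.integral_mul_const, intervalIntegral.integral_mul_const,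
      intervalIntegral.integral_ofReal, intervalIntegral.integral_ofReal,
      Icos, Isin]
    simp [Matrix.add_apply, Matrix.smul_apply, smul_eq_mul, hS, hCc]
  rw [hM]
  -- trace computations
  set br : ℝ := β.re with hbr
  set bi : ℝ := β.im with hbi
  have hPtr : ((P * Pᴴ).trace).re = 2 * (p^2 + br^2 + bi^2) := by
    rw [hP]
    simp [Matrix.trace_fin_three, Matrix.mul_apply, Fin.sum_univ_three,
      Matrix.conjTranspose_apply, Matrix.vecMul, dotProduct,
      Complex.add_re, Complex.mul_re, Complex.mul_im,
      Matrix.vecHead, Matrix.vecTail]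
    ring
  have hMtr : ((((S : ℂ) • Amat + (Cc : ℂ) • Bmat)
      * ((S : ℂ) • Amat + (Cc : ℂ) • Bmat)ᴴ).trace).re
      = 2*a^2*((p*S - br*Cc)^2 + bi^2*Cc^2)
        + 2*(1-a)^2*((p*Cc + br*S)^2 + bi^2*S^2) := by
    rw [hAmat, hBmat]
    simp [Matrix.trace_fin_three, Matrix.mul_apply, Fin.sum_univ_three,
      Matrix.conjTranspose_apply, Matrix.vecMul, dotProduct,
      Matrix.smul_apply, Matrix.add_apply,
      Complex.add_re, Complex.mul_re, Complex.mul_im, smul_eq_mul,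
      Matrix.vecHead, Matrix.vecTail]
    ring
  have ha0 : (0:ℝ) ≤ a := le_trans (by norm_num) ha1
  have h8 : S^2 + Cc^2 ≤ 8 := by
    have h1 := Real.sin_sq_add_cos_sq (τ / Real.sqrt 2)
    have h2 := Real.neg_one_le_cos (τ / Real.sqrt 2)
    have h3 : (Real.sqrt 2)^2 = 2 := Real.sq_sqrt (by norm_num)
    rw [hS, hCc]
    nlinarith [Real.cos_le_one (τ / Real.sqrt 2)]
  have ha' : (1-a)^2 ≤ a^2 := by nlinarith
  have hQ : (0:ℝ) ≤ p^2 + br^2 + bi^2 := by positivity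
  have key2 : ((((S : ℂ) • Amat + (Cc : ℂ) • Bmat)
      * ((S : ℂ) • Amat + (Cc : ℂ) • Bmat)ᴴ).trace).re
      ≤ 8 * a^2 * (((P * Pᴴ).trace).re) := by
    rw [hMtr, hPtr]
    have hN2 : (0:ℝ) ≤ (p*Cc + br*S)^2 + bi^2*S^2 := by positivity
    calc 2*a^2*((p*S - br*Cc)^2 + bi^2*Cc^2) + 2*(1-a)^2*((p*Cc + br*S)^2 + bi^2*S^2)
        ≤ 2*a^2*((p*S - br*Cc)^2 + bi^2*Cc^2) + 2*a^2*((p*Cc + br*S)^2 + bi^2*S^2) := by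
          nlinarith [mul_nonneg (sub_nonneg.2 ha') hN2]
      _ = 2*a^2*((p^2 + br^2 + bi^2)*(S^2 + Cc^2)) := by ring
      _ ≤ 2*a^2*((p^2 + br^2 + bi^2)*8) := by
          have := mul_le_mul_of_nonneg_left h8 hQ
          nlinarith [sq_nonneg a, mul_le_mul_of_nonneg_left
            (mul_le_mul_of_nonneg_left h8 hQ) (by positivity : (0:ℝ) ≤ 2*a^2)]
      _ = 8*a^2*(2*(p^2 + br^2 + bi^2)) := by ring
  have hc0 : (0:ℝ) ≤ 2 * Real.sqrt 2 * a := by positivity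
  have hsq : (2 * Real.sqrt 2 * a)^2 = 8 * a^2 := by
    have : (Real.sqrt 2)^2 = 2 := Real.sq_sqrt (by norm_num)
    nlinarith
  rw [fnorm, fnorm]
  calc Real.sqrt (((((S : ℂ) • Amat + (Cc : ℂ) • Bmat)
        * ((S : ℂ) • Amat + (Cc : ℂ) • Bmat)ᴴ).trace).re)
      ≤ Real.sqrt (8 * a^2 * (((P * Pᴴ).trace).re) ) := Real.sqrt_le_sqrt key2
    _ = Real.sqrt ((2 * Real.sqrt 2 * a)^2) * Real.sqrt (((P * Pᴴ).trace).re) := by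
        rw [← hsq, Real.sqrt_mul (sq_nonneg _)]
    _ = 2 * Real.sqrt 2 * a * Real.sqrt (((P * Pᴴ).trace).re) := by
        rw [Real.sqrt_sq hc0]
end
end

section
/- Let γ0 ≥ 0 and h9 ∈ ℝ. Suppose differentiable matrix functions ρ, U : [0,1] → M₃(ℂ) satisfy ρ'(t) = [U(t), ρ(t)] and U'(t) = h9 [iG9, U(t)] + γ0 [G1, ρ(t)], with ρ(0) = ρ_a and ρ(1) = ρ_b. Then the entrywise complex conjugates ρ̄, Ū satisfy the same system with the same parameters: ρ̄'(t) = [Ū(t), ρ̄(t)] and Ū'(t) = h9 [iG9, Ū(t)] + γ0 [G1, ρ̄(t)], with ρ̄(0) = ρ̄_a and ρ̄(1) = ρ̄_b. Moreover the cost is unchanged: ∫₀¹ ½‖Ū(t)‖² + γ0 Tr(G1 ρ̄(t)) dt = ∫₀¹ ½‖U(t)‖² + γ0 Tr(G1 ρ(t)) dt. -/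
open Matrix Complex MeasureTheory
open scoped Real

noncomputable section

/-- Entrywise complex conjugate of a matrix. -/
def conjM (A : M3) : M3 := A.map (starRingEnd ℂ)

lemma conjM_mul (A B : M3) : conjM (A * B) = conjM A * conjM B := by
  simp [conjM, Matrix.map_mul]

lemma conjM_add (A B : M3) : conjM (A + B) = conjM A + conjM B := by
  simp [conjM, Matrix.map_add]

lemma conjM_smul (c : ℂ) (A : M3) : conjM (c • A) = (starRingEnd ℂ c) • conjM A := by
  ext i j; simp [conjM, Matrix.smul_apply]

lemma conjM_mcomm (A B : M3) : conjM (mcomm A B) = mcomm (conjM A) (conjM B) := by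
  simp [conjM, mcomm, Matrix.map_sub, Matrix.map_mul]

lemma conjM_G1 : conjM G1 = G1 := by
  ext i j; fin_cases i <;> fin_cases j <;>
    simp [conjM, G1, Matrix.vecHead, Matrix.vecTail]

lemma conjM_IG9 : conjM (I • G9) = I • G9 := by
  ext i j; fin_cases i <;> fin_cases j <;>
    simp [conjM, G9, Matrix.smul_apply, Matrix.vecHead, Matrix.vecTail, Complex.ext_iff]

lemma trace_re_conjM (M : M3) : (conjM M).trace.re = M.trace.re := by
  simp [conjM, Matrix.trace, Matrix.diag, Complex.re_sum]

lemma conjM_conjTranspose (A : M3) : (conjM A)ᴴ = Aᵀ := by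
  ext i j; simp [conjM, conjTranspose_apply]

lemma conjM_of_conjTranspose (A : M3) : conjM (Aᴴ) = Aᵀ := by
  ext i j; simp [conjM, conjTranspose_apply]

lemma fnorm_conjM (A : M3) : fnorm (conjM A) = fnorm A := by
  unfold fnorm
  rw [conjM_conjTranspose, ← conjM_of_conjTranspose, ← conjM_mul, trace_re_conjM]

lemma conjM_apply (A : M3) (i j : Fin 3) : conjM A i j = star (A i j) := rfl

/-- entrywise complex conjugation maps solutions of the extremal system
`ρ' = [U,ρ]`, `U' = h9[iG9,U] + γ0[G1,ρ]` to solutions with conjugated boundary data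
and the same cost. -/
theorem conjugate_solution
    (γ0 : ℝ) (hγ0 : 0 ≤ γ0) (h9 : ℝ)
    (ρ U : ℝ → M3) (ρa ρb : M3)
    (hρ : ∀ t ∈ Set.Icc (0:ℝ) 1, ∀ i j,
      HasDerivAt (fun s => ρ s i j) ((mcomm (U t) (ρ t)) i j) t)
    (hU : ∀ t ∈ Set.Icc (0:ℝ) 1, ∀ i j,
      HasDerivAt (fun s => U s i j)
        (((h9 : ℂ) • mcomm (I • G9) (U t) + (γ0 : ℂ) • mcomm G1 (ρ t)) i j) t)
    (h0 : ρ 0 = ρa) (h1 : ρ 1 = ρb) :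
    (∀ t ∈ Set.Icc (0:ℝ) 1, ∀ i j,
      HasDerivAt (fun s => conjM (ρ s) i j) ((mcomm (conjM (U t)) (conjM (ρ t))) i j) t) ∧
    (∀ t ∈ Set.Icc (0:ℝ) 1, ∀ i j,
      HasDerivAt (fun s => conjM (U s) i j)
        (((h9 : ℂ) • mcomm (I • G9) (conjM (U t))
          + (γ0 : ℂ) • mcomm G1 (conjM (ρ t))) i j) t) ∧
    conjM (ρ 0) = conjM ρa ∧ conjM (ρ 1) = conjM ρb ∧
    (∫ t in (0:ℝ)..1, (1/2 * (fnorm (conjM (U t)))^2 + γ0 * ((G1 * conjM (ρ t)).trace.re)))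
      = ∫ t in (0:ℝ)..1, (1/2 * (fnorm (U t))^2 + γ0 * ((G1 * ρ t).trace.re)) := by
  refine ⟨?_, ?_, by rw [h0], by rw [h1], ?_⟩
  · intro t ht i j
    rw [← conjM_mcomm, conjM_apply]
    exact (hρ t ht i j).star
  · intro t ht i j
    have key : conjM ((h9 : ℂ) • mcomm (I • G9) (U t) + (γ0 : ℂ) • mcomm G1 (ρ t))
        = (h9 : ℂ) • mcomm (I • G9) (conjM (U t)) + (γ0 : ℂ) • mcomm G1 (conjM (ρ t)) := by
      rw [conjM_add, conjM_smul, conjM_smul, conjM_mcomm, conjM_mcomm, conjM_G1, conjM_IG9,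
        Complex.conj_ofReal, Complex.conj_ofReal]
    rw [← key, conjM_apply]
    exact (hU t ht i j).star
  · have hpt : ∀ t : ℝ,
        1/2 * (fnorm (conjM (U t)))^2 + γ0 * ((G1 * conjM (ρ t)).trace.re)
        = 1/2 * (fnorm (U t))^2 + γ0 * ((G1 * ρ t).trace.re) := by
      intro t
      have hg : G1 * conjM (ρ t) = conjM (G1 * ρ t) := by rw [conjM_mul, conjM_G1]
      rw [fnorm_conjM, hg, trace_re_conjM]
    simp only [hpt]
end
end

section
/- Let K ∈ U(3) be block diagonal: K = diag(e^{iφ}, K̂) with φ ∈ ℝ and K̂ a 2×2 unitary matrix. Let U : [0,1] → M₃(ℂ) take values in the set of skew-Hermitian matrices whose nonzero entries lie only in positions (1,2), (1,3), (2,1), (3,1), and let ρ : [0,1] → M₃(ℂ) be differentiable with ρ'(t) = [U(t), ρ(t)]. Then: (i) ρ_K(t) := K ρ(t) K† satisfies ρ_K'(t) = [K U(t) K†, ρ_K(t)]; (ii) K U(t) K† again has nonzero entries only in positions (1,2), (1,3), (2,1), (3,1); (iii) ‖K U(t) K†‖ = ‖U(t)‖ for all t; and (iv) Tr(G1 ·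 Kρ(t)K†) = Tr(G1 ρ(t)) for all t. Consequently, for every γ0 ≥ 0, ∫₀¹ ½‖KUK†‖² + γ0 Tr(G1 KρK†) dt = ∫₀¹ ½‖U‖² + γ0 Tr(G1 ρ) dt, so the conjugated pair is admissible for the transfer Kρ(0)K† → Kρ(1)K† with the same cost. -/
open Matrix Complex MeasureTheory
open scoped Real

noncomputable section

/-- conjugation by a block-diagonal unitary `K = diag(e^{iφ}, K̂)` maps
admissible pairs of the Lambda system to admissible pairs with the same control norm,
the same occupancy, and the same cost. -/
theorem block_diagonal_conjugation
    (K : M3) (hK : K ∈ Matrix.unitaryGroup (Fin 3) ℂ)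
    (hK01 : K 0 1 = 0) (hK02 : K 0 2 = 0) (hK10 : K 1 0 = 0) (hK20 : K 2 0 = 0)
    (U ρ : ℝ → M3)
    (hUsk : ∀ t, (U t)ᴴ = -(U t))
    (hUz : ∀ t, U t 0 0 = 0 ∧ U t 1 1 = 0 ∧ U t 2 2 = 0 ∧ U t 1 2 = 0 ∧ U t 2 1 = 0)
    (hρ : ∀ t ∈ Set.Icc (0:ℝ) 1, ∀ i j,
      HasDerivAt (fun s => ρ s i j) ((mcomm (U t) (ρ t)) i j) t)
    (γ0 : ℝ) (hγ0 : 0 ≤ γ0) :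
    (∀ t ∈ Set.Icc (0:ℝ) 1, ∀ i j,
      HasDerivAt (fun s => (K * ρ s * Kᴴ) i j)
        ((mcomm (K * U t * Kᴴ) (K * ρ t * Kᴴ)) i j) t) ∧
    (∀ t, (K * U t * Kᴴ) 0 0 = 0 ∧ (K * U t * Kᴴ) 1 1 = 0 ∧ (K * U t * Kᴴ) 2 2 = 0 ∧
      (K * U t * Kᴴ) 1 2 = 0 ∧ (K * U t * Kᴴ) 2 1 = 0) ∧
    (∀ t, fnorm (K * U t * Kᴴ) = fnorm (U t)) ∧
    (∀ t, (G1 * (K * ρ t * Kᴴ)).trace = (G1 * ρ t).trace) ∧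
    (∫ t in (0:ℝ)..1, (1/2 * (fnorm (K * U t * Kᴴ))^2
        + γ0 * ((G1 * (K * ρ t * Kᴴ)).trace.re)))
      = ∫ t in (0:ℝ)..1, (1/2 * (fnorm (U t))^2 + γ0 * ((G1 * ρ t).trace.re)) := by
  have hKK' : Kᴴ * K = 1 := by
    have := hK.1
    simpa [Matrix.star_eq_conjTranspose] using this
  have hKK : K * Kᴴ = 1 := by
    have := hK.2
    simpa [Matrix.star_eq_conjTranspose] using this
  have hmul : ∀ A B : M3, (K * A * Kᴴ) * (K * B * Kᴴ) = K * (A * B) * Kᴴ := by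
    intro A B
    calc K * A * Kᴴ * (K * B * Kᴴ) = K * A * (Kᴴ * K) * (B * Kᴴ) := by
          simp only [Matrix.mul_assoc]
      _ = K * (A * B) * Kᴴ := by simp [hKK', Matrix.mul_assoc]
  have hconj : ∀ A B : M3, mcomm (K * A * Kᴴ) (K * B * Kᴴ) = K * mcomm A B * Kᴴ := by
    intro A B
    simp only [mcomm, Matrix.mul_sub, Matrix.sub_mul, hmul]
  have hK00 : (starRingEnd ℂ) (K 0 0) * K 0 0 = 1 := by
    have h := congrFun (congrFun hKK' 0) 0
    simpa [Matrix.mul_apply, Fin.sum_univ_three, Matrix.conjTranspose_apply,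
      hK10, hK20, Matrix.one_apply] using h
  have htr : ∀ A : M3, (K * A * Kᴴ) 0 0 = A 0 0 := by
    intro A
    have h : (K * A * Kᴴ) 0 0 = K 0 0 * A 0 0 * (starRingEnd ℂ) (K 0 0) := by
      simp [Matrix.mul_apply, Fin.sum_univ_three, Matrix.conjTranspose_apply,
        hK01, hK02]
    rw [h]
    calc K 0 0 * A 0 0 * (starRingEnd ℂ) (K 0 0)
        = ((starRingEnd ℂ) (K 0 0) * K 0 0) * A 0 0 := by ring
      _ = A 0 0 := by rw [hK00]; ring
  have htrace : ∀ A : M3, (G1 * A).trace = A 0 0 := by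
    intro A
    simp [Matrix.trace, G1, Matrix.mul_apply, Fin.sum_univ_three, Matrix.diag,
      Matrix.vecHead, Matrix.vecTail]
  have hct : ∀ t, (K * U t * Kᴴ)ᴴ = K * (U t)ᴴ * Kᴴ := by
    intro t
    simp [Matrix.conjTranspose_mul, Matrix.mul_assoc]
  have hfn : ∀ t, fnorm (K * U t * Kᴴ) = fnorm (U t) := by
    intro t
    unfold fnorm
    congr 2
    rw [hct, hmul, Matrix.trace_mul_cycle, hKK', Matrix.one_mul]
  refine ⟨?_, ?_, ?_, ?_, ?_⟩
  · intro t ht i j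
    have hD : ∀ l, HasDerivAt (fun s => (K * ρ s) i l)
        ((K * mcomm (U t) (ρ t)) i l) t := by
      intro l
      simp only [Matrix.mul_apply]
      exact HasDerivAt.fun_sum fun k _ => (hρ t ht k l).const_mul (K i k)
    have hD2 : HasDerivAt (fun s => (K * ρ s * Kᴴ) i j)
        ((K * mcomm (U t) (ρ t) * Kᴴ) i j) t := by
      simp only [Matrix.mul_apply (M := K * _)]
      exact HasDerivAt.fun_sum fun l _ => (hD l).mul_const (Kᴴ l j)
    rw [hconj]
    exact hD2
  · intro t
    obtain ⟨h00, h11, h22, h12, h21⟩ := hUz t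
    refine ⟨?_, ?_, ?_, ?_, ?_⟩ <;>
      simp [Matrix.mul_apply, Fin.sum_univ_three, Matrix.conjTranspose_apply,
        hK01, hK02, hK10, hK20, h00, h11, h22, h12, h21]
  · exact hfn
  · intro t
    rw [htrace, htrace, htr]
  · apply intervalIntegral.integral_congr
    intro t _
    simp only [hfn t, htrace, htr]
end
end

section
/- Let R0 and R1 be invertible 2×2 complex matrices, and let ρ0 and ρ1 be the 3×3 matrices with zero first row and zero first column whose lower-right 2×2 blocks are R0 and R1 respectively. If X is a 3×3 unitary matrix with X ρ0 X† = ρ1, then X is block diagonal: X = diag(x, X̂) where x ∈ ℂ with |x| = 1 and X̂ is a 2×2 unitary matrix. -/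
open Matrix Complex MeasureTheory
open scoped Real

noncomputable section

/-- a unitary carrying one matrix of the form `diag(0-row/col, R0)` with
`R0` invertible to another such matrix `diag(0-row/col, R1)` must be block diagonal
`X = diag(x, X̂)` with `|x| = 1` and `X̂` a 2×2 unitary. -/
theorem unitary_transfer_block_diagonal
    (R0 R1 : Matrix (Fin 2) (Fin 2) ℂ) (hR0 : IsUnit R0) (hR1 : IsUnit R1)
    (ρ0 ρ1 : M3)
    (hρ0z : ∀ j, ρ0 0 j = 0 ∧ ρ0 j 0 = 0)
    (hρ0b : ρ0 1 1 = R0 0 0 ∧ ρ0 1 2 = R0 0 1 ∧ ρ0 2 1 = R0 1 0 ∧ ρ0 2 2 = R0 1 1)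
    (hρ1z : ∀ j, ρ1 0 j = 0 ∧ ρ1 j 0 = 0)
    (hρ1b : ρ1 1 1 = R1 0 0 ∧ ρ1 1 2 = R1 0 1 ∧ ρ1 2 1 = R1 1 0 ∧ ρ1 2 2 = R1 1 1)
    (X : M3) (hX : X ∈ Matrix.unitaryGroup (Fin 3) ℂ)
    (hXtransfer : X * ρ0 * Xᴴ = ρ1) :
    X 0 1 = 0 ∧ X 0 2 = 0 ∧ X 1 0 = 0 ∧ X 2 0 = 0 ∧
    ‖X 0 0‖ = 1 ∧
    !![X 1 1, X 1 2; X 2 1, X 2 2] ∈ Matrix.unitaryGroup (Fin 2) ℂ := by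
  have hU1 : Xᴴ * X = 1 := by
    have := hX.1
    simpa [Matrix.star_eq_conjTranspose] using this
  have hU2 : X * Xᴴ = 1 := by
    have := hX.2
    simpa [Matrix.star_eq_conjTranspose] using this
  have hXρ : X * ρ0 = ρ1 * X := by
    calc X * ρ0 = X * ρ0 * (Xᴴ * X) := by rw [hU1, mul_one]
    _ = (X * ρ0 * Xᴴ) * X := by noncomm_ring
    _ = ρ1 * X := by rw [hXtransfer]
  obtain ⟨h11, h12, h21, h22⟩ := hρ0b
  have hdet : R0.det ≠ 0 := by
    intro h
    have := (Matrix.isUnit_iff_isUnit_det R0).mp hR0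
    rw [h] at this
    simp at this
  have hdet' : R0 0 0 * R0 1 1 - R0 0 1 * R0 1 0 ≠ 0 := by
    rwa [Matrix.det_fin_two] at hdet
  have e1 : X 0 1 * R0 0 0 + X 0 2 * R0 1 0 = 0 := by
    have := congrFun (congrFun hXρ 0) 1
    simp [Matrix.mul_apply, Fin.sum_univ_three, (hρ0z 0).2, (hρ0z 1).1, (hρ1z 1).1,
      (hρ1z 0).1, (hρ1z 2).1, h11, h21] at this
    linear_combination this
  have e2 : X 0 1 * R0 0 1 + X 0 2 * R0 1 1 = 0 := by
    have := congrFun (congrFun hXρ 0) 2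
    simp [Matrix.mul_apply, Fin.sum_univ_three, (hρ0z 0).2, (hρ0z 2).1, (hρ1z 1).1,
      (hρ1z 0).1, (hρ1z 2).1, h12, h22] at this
    linear_combination this
  have hX01 : X 0 1 = 0 := by
    have h : X 0 1 * (R0 0 0 * R0 1 1 - R0 0 1 * R0 1 0) = 0 := by
      linear_combination R0 1 1 * e1 - R0 1 0 * e2
    exact (mul_eq_zero.mp h).resolve_right hdet'
  have hX02 : X 0 2 = 0 := by
    have h : X 0 2 * (R0 0 0 * R0 1 1 - R0 0 1 * R0 1 0) = 0 := by
      linear_combination R0 0 0 * e2 - R0 0 1 * e1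
    exact (mul_eq_zero.mp h).resolve_right hdet'
  have habs : X 0 0 * star (X 0 0) = 1 := by
    have := congrFun (congrFun hU2 0) 0
    simpa [Matrix.mul_apply, Fin.sum_univ_three, Matrix.conjTranspose_apply,
      hX01, hX02] using this
  have habs1 : ‖X 0 0‖ = 1 := by
    have : ‖X 0 0‖ ^ 2 = 1 := by
      have := congrArg (‖·‖) habs
      simpa [norm_mul, norm_star, Complex.norm_conj, sq] using this
    nlinarith [norm_nonneg (X 0 0)]
  have hcol : star (X 0 0) * X 0 0 + star (X 1 0) * X 1 0 + star (X 2 0) * X 2 0 = 1 := by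
    have := congrFun (congrFun hU1 0) 0
    simpa [Matrix.mul_apply, Fin.sum_univ_three, Matrix.conjTranspose_apply] using this
  have hcol' : star (X 1 0) * X 1 0 + star (X 2 0) * X 2 0 = 0 := by
    have h00 : star (X 0 0) * X 0 0 = 1 := by rw [mul_comm]; exact habs
    linear_combination hcol - h00
  have hre : Complex.normSq (X 1 0) + Complex.normSq (X 2 0) = 0 := by
    have := congrArg Complex.re hcol'
    simpa [Complex.mul_conj', Complex.add_re, Complex.ofReal_re, Complex.normSq_apply] using this
  have hX10 : X 1 0 = 0 := by
    have := Complex.normSq_nonneg (X 1 0)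
    have := Complex.normSq_nonneg (X 2 0)
    have : Complex.normSq (X 1 0) = 0 := by linarith
    exact Complex.normSq_eq_zero.mp this
  have hX20 : X 2 0 = 0 := by
    have := Complex.normSq_nonneg (X 1 0)
    have := Complex.normSq_nonneg (X 2 0)
    have : Complex.normSq (X 2 0) = 0 := by linarith
    exact Complex.normSq_eq_zero.mp this
  refine ⟨hX01, hX02, hX10, hX20, habs1, ?_⟩
  rw [Matrix.mem_unitaryGroup_iff]
  ext i j
  have g11 := congrFun (congrFun hU2 1) 1
  have g12 := congrFun (congrFun hU2 1) 2
  have g21 := congrFun (congrFun hU2 2) 1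
  have g22 := congrFun (congrFun hU2 2) 2
  simp [Matrix.mul_apply, Fin.sum_univ_three, Matrix.conjTranspose_apply, hX10, hX20] at g11 g12 g21 g22
  fin_cases i <;> fin_cases j <;>
    simp [Matrix.mul_apply, Fin.sum_univ_two, Matrix.star_eq_conjTranspose,
      Matrix.conjTranspose_apply, g11, g12, g21, g22]
end
end
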